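/- arXiv:1706.03743 — 2 statements merged into one kernel-verified Lean document; each statement's English description precedes it below -/
import Mathlib

section
/- Suppose every continuous H-valued cocycle over the restriction to finitely supported configurations is a 'coboundary relative to φ' in the following sense: c(g,x) = b(g·x)φ(g)b(x)⁻¹ holds for all g and all finitely supported x, where b : Δ(0⃗) → H depends only on x|B(3L,1) and φ is a homomorphism. Then c(g,x) = b̄(g·x)φ(g)b̄(x)⁻¹ holds for all x ∈ A^G, where b̄(x) := b(x̄) and x̄ agrees with x on B(3L,1) and is 0 elsewhere. -/
/-- Word norm with respect to a generating set `S`. -/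
noncomputable def wordNorm {G : Type*} [Group G] (S : Set G) (g : G) : ℕ :=
  sInf {n | ∃ w : List G, (∀ s ∈ w, s ∈ S) ∧ w.length = n ∧ w.prod = g}

/-- Left-invariant word metric. -/
noncomputable def wdist {G : Type*} [Group G] (S : Set G) (g h : G) : ℕ :=
  wordNorm S (g⁻¹ * h)

section Aux

variable {G : Type*} [Group G] {S : Set G}

lemma word_set_nonempty (hsym : ∀ s ∈ S, s⁻¹ ∈ S) (hgen : Subgroup.closure S = ⊤) (g : G) :
    {n | ∃ w : List G, (∀ s ∈ w, s ∈ S) ∧ w.length = n ∧ w.prod = g}.Nonempty := by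
  have hg : g ∈ Submonoid.closure (S ∪ S⁻¹) := by
    rw [← Subgroup.closure_toSubmonoid, hgen]; trivial
  obtain ⟨l, hl, hprod⟩ := Submonoid.exists_list_of_mem_closure hg
  refine ⟨l.length, l, fun s hs => ?_, rfl, hprod⟩
  rcases hl s hs with h | h
  · exact h
  · have := hsym _ (Set.mem_inv.mp h)
    simpa using this

lemma exists_min_word (hsym : ∀ s ∈ S, s⁻¹ ∈ S) (hgen : Subgroup.closure S = ⊤) (g : G) :
    ∃ w : List G, (∀ s ∈ w, s ∈ S) ∧ w.length = wordNorm S g ∧ w.prod = g :=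
  Nat.sInf_mem (word_set_nonempty hsym hgen g)

lemma wordNorm_le_length {w : List G} (hw : ∀ s ∈ w, s ∈ S) :
    wordNorm S w.prod ≤ w.length :=
  Nat.sInf_le ⟨w, hw, rfl, rfl⟩

lemma wordNorm_mul_le (hsym : ∀ s ∈ S, s⁻¹ ∈ S) (hgen : Subgroup.closure S = ⊤) (g h : G) :
    wordNorm S (g * h) ≤ wordNorm S g + wordNorm S h := by
  obtain ⟨w1, hw1, hl1, hp1⟩ := exists_min_word hsym hgen g
  obtain ⟨w2, hw2, hl2, hp2⟩ := exists_min_word hsym hgen h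
  have hword : ∀ s ∈ w1 ++ w2, s ∈ S := by
    intro s hs
    rcases List.mem_append.mp hs with h' | h'
    · exact hw1 s h'
    · exact hw2 s h'
  have := wordNorm_le_length hword
  simpa [hp1, hp2, hl1, hl2] using this

lemma wordNorm_inv_le (hsym : ∀ s ∈ S, s⁻¹ ∈ S) (hgen : Subgroup.closure S = ⊤) (g : G) :
    wordNorm S g⁻¹ ≤ wordNorm S g := by
  obtain ⟨w, hw, hl, hp⟩ := exists_min_word hsym hgen g
  have hprod : ((w.map fun t => t⁻¹).reverse).prod = g⁻¹ := by
    rw [← List.prod_inv_reverse, hp]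
  have hword : ∀ s ∈ (w.map fun t => t⁻¹).reverse, s ∈ S := by
    intro s hs
    rw [List.mem_reverse, List.mem_map] at hs
    obtain ⟨t, ht, rfl⟩ := hs
    exact hsym t (hw t ht)
  have := wordNorm_le_length hword
  rw [hprod] at this
  simpa [hl] using this

lemma ball_finite (hfin : S.Finite) (hsym : ∀ s ∈ S, s⁻¹ ∈ S)
    (hgen : Subgroup.closure S = ⊤) : ∀ n : ℕ, {g : G | wordNorm S g ≤ n}.Finite := by
  intro n
  induction n with
  | zero =>
    apply Set.Finite.subset (Set.finite_singleton 1)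
    intro g hg
    obtain ⟨w, hw, hl, hp⟩ := exists_min_word hsym hgen g
    have hlen : w.length = 0 := by
      have : wordNorm S g ≤ 0 := hg
      omega
    rw [List.length_eq_zero_iff] at hlen
    subst hlen
    simp at hp
    simp [← hp]
  | succ n ih =>
    apply Set.Finite.subset (ih.union (hfin.biUnion (fun s _ => ih.image (fun g => s * g))))
    intro g hg
    obtain ⟨w, hw, hl, hp⟩ := exists_min_word hsym hgen g
    cases w with
    | nil =>
      left
      simp at hp
      have : wordNorm S g ≤ 0 := by
        have := wordNorm_le_length (S := S) (w := []) (by simp)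
        simpa [hp] using this
      simpa using le_trans this (Nat.zero_le n)
    | cons s t =>
      right
      refine Set.mem_biUnion (hw s (by simp)) ?_
      refine ⟨t.prod, ?_, by rw [← hp, List.prod_cons]⟩
      have h1 : wordNorm S t.prod ≤ t.length :=
        wordNorm_le_length (fun u hu => hw u (List.mem_cons_of_mem s hu))
      have h2 : (s :: t).length = wordNorm S g := hl
      have h3 : wordNorm S g ≤ n + 1 := hg
      simp only [List.length_cons] at h2
      exact Set.mem_setOf.mpr (by omega)

end Aux

/-- If c is a coboundary relative to φ on finitely supported configurations,
with transfer function b depending only on the restriction to B(3L,1), then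
b̄(x) := b(x̄) (x̄ the truncation of x to B(3L,1)) is a transfer function on all
of A^G. -/
theorem coboundary_extends {G : Type*} [Group G] {A : Type*} [Finite A] (a0 : A)
    {H : Type*} [Group H] (S : Set G)
    (hfin : S.Finite) (hsym : ∀ s ∈ S, s⁻¹ ∈ S) (hgen : Subgroup.closure S = ⊤)
    (c : G → (G → A) → H)
    (hcoc : ∀ (g h : G) (x : G → A),
      c (g * h) x = c g (fun k => x (h⁻¹ * k)) * c h x)
    (L : ℕ)
    (hL : ∀ s ∈ S, ∀ x y : G → A,
      (∀ g : G, wordNorm S g ≤ L → x g = y g) → c s x = c s y)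
    (φ : G →* H) (b : (G → A) → H)
    (hbloc : ∀ x y : G → A, {g : G | x g ≠ a0}.Finite → {g : G | y g ≠ a0}.Finite →
      (∀ g : G, wordNorm S g ≤ 3 * L → x g = y g) → b x = b y)
    (hcob : ∀ (g : G) (x : G → A), {h : G | x h ≠ a0}.Finite →
      c g x = b (fun k => x (g⁻¹ * k)) * φ g * (b x)⁻¹) :
    ∀ (g : G) (x : G → A),
      c g x = b (fun h => if wordNorm S h ≤ 3 * L then x (g⁻¹ * h) else a0) * φ g *
        (b (fun h => if wordNorm S h ≤ 3 * L then x h else a0))⁻¹ := by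
  -- c 1 x = 1
  have hone : ∀ x : G → A, c 1 x = 1 := by
    intro x
    have := hcoc 1 1 x
    simp only [one_mul, inv_one] at this
    exact left_eq_mul.mp this
  -- locality along words
  have hloc_word : ∀ w : List G, (∀ s ∈ w, s ∈ S) → ∀ x y : G → A,
      (∀ h : G, wordNorm S h ≤ w.length + L → x h = y h) → c w.prod x = c w.prod y := by
    intro w
    induction w with
    | nil => intro _ x y _; simp [hone]
    | cons s t ih =>
      intro hw x y hxy
      rw [List.prod_cons, hcoc s t.prod x, hcoc s t.prod y]
      have htlen : wordNorm S t.prod ≤ t.length :=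
        wordNorm_le_length (fun u hu => hw u (List.mem_cons_of_mem s hu))
      congr 1
      · apply hL s (hw s (by simp))
        intro k hk
        apply hxy
        calc wordNorm S (t.prod⁻¹ * k)
            ≤ wordNorm S t.prod⁻¹ + wordNorm S k := wordNorm_mul_le hsym hgen _ _
          _ ≤ (s :: t).length + L := by
              have := wordNorm_inv_le hsym hgen t.prod
              simp only [List.length_cons]
              omega
      · apply ih (fun u hu => hw u (List.mem_cons_of_mem s hu)) x y
        intro k hk
        apply hxy
        simp only [List.length_cons]
        omega
  -- locality for group elements
  have hloc : ∀ (g : G) (x y : G → A),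
      (∀ h : G, wordNorm S h ≤ wordNorm S g + L → x h = y h) → c g x = c g y := by
    intro g x y hxy
    obtain ⟨w, hw, hl, hp⟩ := exists_min_word hsym hgen g
    rw [← hp]
    exact hloc_word w hw x y (fun h hh => hxy h (by rw [hl] at hh; omega))
  intro g x
  set n := wordNorm S g + 3 * L with hn
  set xt : G → A := fun h => if wordNorm S h ≤ n then x h else a0 with hxt
  have hxt_fin : {h : G | xt h ≠ a0}.Finite := by
    apply (ball_finite hfin hsym hgen n).subset
    intro h hh
    by_contra hcon
    exact hh (if_neg hcon)
  have h1 : c g x = c g xt := by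
    apply hloc
    intro h hh
    have : wordNorm S h ≤ n := by omega
    simp [hxt, if_pos this]
  rw [h1, hcob g xt hxt_fin]
  have h2 : b (fun k => xt (g⁻¹ * k)) =
      b (fun h => if wordNorm S h ≤ 3 * L then x (g⁻¹ * h) else a0) := by
    apply hbloc
    · apply Set.Finite.subset (hxt_fin.image (fun h => g * h))
      intro k hk
      exact ⟨g⁻¹ * k, hk, by group⟩
    · apply (ball_finite hfin hsym hgen (3 * L)).subset
      intro h hh
      by_contra hcon
      exact hh (if_neg hcon)
    · intro k hk
      show xt (g⁻¹ * k) = if wordNorm S k ≤ 3 * L then x (g⁻¹ * k) else a0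
      rw [if_pos hk]
      have : wordNorm S (g⁻¹ * k) ≤ n := by
        calc wordNorm S (g⁻¹ * k)
            ≤ wordNorm S g⁻¹ + wordNorm S k := wordNorm_mul_le hsym hgen _ _
          _ ≤ n := by
              have := wordNorm_inv_le hsym hgen g
              omega
      simp [hxt, if_pos this]
  have h3 : b xt = b (fun h => if wordNorm S h ≤ 3 * L then x h else a0) := by
    apply hbloc
    · exact hxt_fin
    · apply (ball_finite hfin hsym hgen (3 * L)).subset
      intro h hh
      by_contra hcon
      exact hh (if_neg hcon)
    · intro k hk
      have : wordNorm S k ≤ n := by omega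
      simp [hxt, if_pos this, if_pos hk]
  rw [h2, h3]
end

section
/- Let G be an infinite finitely generated group with geodesic γ : ℤ → G, γ(0) = 1, and let L ≥ 0. Given x, y ∈ A^G agreeing on B(3L,1), there exists z ∈ A^G such that z agrees with x on the L-neighborhood of γ(ℤ≥0), z agrees with y on the L-neighborhood of γ(ℤ≤0), and z(g) = 0 outside the union of these two neighborhoods. Moreover, if x and y are finitely supported then so is z. -/
lemma wordNorm_set_nonempty {G : Type*} [Group G] {S : Set G}
    (hsym : ∀ s ∈ S, s⁻¹ ∈ S) (hgen : Subgroup.closure S = ⊤) (g : G) :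
    {n | ∃ w : List G, (∀ s ∈ w, s ∈ S) ∧ w.length = n ∧ w.prod = g}.Nonempty := by
  have hg : g ∈ Subgroup.closure S := by rw [hgen]; trivial
  have hS : S ∪ S⁻¹ = S := by
    apply Set.union_eq_self_of_subset_right
    intro s hs; simpa using hsym _ hs
  have hg' : g ∈ Submonoid.closure S := by
    have := Subgroup.closure_toSubmonoid S
    rw [hS] at this
    rw [← this]; exact hg
  obtain ⟨l, hl, hprod⟩ := Submonoid.exists_list_of_mem_closure hg'
  exact ⟨l.length, l, hl, rfl, hprod⟩

lemma wordNorm_spec {G : Type*} [Group G] {S : Set G}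
    (hsym : ∀ s ∈ S, s⁻¹ ∈ S) (hgen : Subgroup.closure S = ⊤) (g : G) :
    ∃ w : List G, (∀ s ∈ w, s ∈ S) ∧ w.length = wordNorm S g ∧ w.prod = g :=
  Nat.sInf_mem (wordNorm_set_nonempty hsym hgen g)

lemma wordNorm_le {G : Type*} [Group G] {S : Set G} {g : G} (w : List G)
    (hw : ∀ s ∈ w, s ∈ S) (hprod : w.prod = g) : wordNorm S g ≤ w.length :=
  Nat.sInf_le ⟨w, hw, rfl, hprod⟩

lemma wordNorm_mul {G : Type*} [Group G] {S : Set G}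
    (hsym : ∀ s ∈ S, s⁻¹ ∈ S) (hgen : Subgroup.closure S = ⊤) (g h : G) :
    wordNorm S (g * h) ≤ wordNorm S g + wordNorm S h := by
  obtain ⟨w1, h1, hl1, hp1⟩ := wordNorm_spec hsym hgen g
  obtain ⟨w2, h2, hl2, hp2⟩ := wordNorm_spec hsym hgen h
  have := wordNorm_le (S := S) (w1 ++ w2)
    (by intro s hs; rcases List.mem_append.mp hs with h | h; exacts [h1 s h, h2 s h])
    (by rw [List.prod_append, hp1, hp2])
  simpa [hl1, hl2] using this

lemma wordNorm_inv {G : Type*} [Group G] {S : Set G}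
    (hsym : ∀ s ∈ S, s⁻¹ ∈ S) (hgen : Subgroup.closure S = ⊤) (g : G) :
    wordNorm S g⁻¹ ≤ wordNorm S g := by
  obtain ⟨w, hw, hl, hp⟩ := wordNorm_spec hsym hgen g
  subst hp
  have := wordNorm_le (S := S) (g := w.prod⁻¹) ((w.map (·⁻¹)).reverse)
    (by intro s hs
        simp only [List.mem_reverse, List.mem_map] at hs
        obtain ⟨t, ht, rfl⟩ := hs; exact hsym t (hw t ht))
    (by rw [List.prod_reverse_noncomm]
        simp)
  simpa [hl] using this

lemma wdist_comm {G : Type*} [Group G] {S : Set G}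
    (hsym : ∀ s ∈ S, s⁻¹ ∈ S) (hgen : Subgroup.closure S = ⊤) (g h : G) :
    wdist S g h = wdist S h g := by
  have h1 := wordNorm_inv hsym hgen (g⁻¹ * h)
  have h2 := wordNorm_inv hsym hgen (h⁻¹ * g)
  simp only [mul_inv_rev, inv_inv] at h1 h2
  exact le_antisymm (by simpa [wdist] using h2) (by simpa [wdist] using h1)

lemma wdist_triangle {G : Type*} [Group G] {S : Set G}
    (hsym : ∀ s ∈ S, s⁻¹ ∈ S) (hgen : Subgroup.closure S = ⊤) (a b c : G) :
    wdist S a c ≤ wdist S a b + wdist S b c := by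
  have : a⁻¹ * c = (a⁻¹ * b) * (b⁻¹ * c) := by group
  unfold wdist
  rw [this]
  exact wordNorm_mul hsym hgen _ _

/-- Given configurations x, y agreeing on B(3L,1) and a biinfinite geodesic γ
through 1, there is a configuration z agreeing with x on the L-neighborhood of
the positive half of γ, with y on the L-neighborhood of the negative half, and
equal to 0 elsewhere; z is finitely supported if x and y are. -/
theorem exists_splice_configuration {G : Type*} [Group G] [Infinite G]
    {A : Type*} [Finite A] (a0 : A) (S : Set G)
    (hfin : S.Finite) (hsym : ∀ s ∈ S, s⁻¹ ∈ S) (hgen : Subgroup.closure S = ⊤)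
    (γ : ℤ → G) (hγ : ∀ m n : ℤ, wdist S (γ m) (γ n) = (n - m).natAbs)
    (hγ0 : γ 0 = 1) (L : ℕ) (x y : G → A)
    (hagree : ∀ g : G, wordNorm S g ≤ 3 * L → x g = y g) :
    ∃ z : G → A,
      (∀ g : G, (∃ n : ℤ, 0 ≤ n ∧ wdist S g (γ n) ≤ L) → z g = x g) ∧
      (∀ g : G, (∃ n : ℤ, n ≤ 0 ∧ wdist S g (γ n) ≤ L) → z g = y g) ∧
      (∀ g : G, ¬ (∃ n : ℤ, 0 ≤ n ∧ wdist S g (γ n) ≤ L) →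
        ¬ (∃ n : ℤ, n ≤ 0 ∧ wdist S g (γ n) ≤ L) → z g = a0) ∧
      ({g : G | x g ≠ a0}.Finite → {g : G | y g ≠ a0}.Finite →
        {g : G | z g ≠ a0}.Finite) := by
  classical
  -- if g is in both neighborhoods, x g = y g
  have key : ∀ g : G, (∃ n : ℤ, 0 ≤ n ∧ wdist S g (γ n) ≤ L) →
      (∃ m : ℤ, m ≤ 0 ∧ wdist S g (γ m) ≤ L) → x g = y g := by
    rintro g ⟨n, hn, h1⟩ ⟨m, hm, h2⟩
    apply hagree
    have hnm : (n - m).natAbs ≤ 2 * L := by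
      have := wdist_triangle hsym hgen (γ m) g (γ n)
      rw [hγ m n] at this
      rw [wdist_comm hsym hgen (γ m) g] at this
      omega
    have hn2 : n.natAbs ≤ 2 * L := by omega
    have : wordNorm S g ≤ wdist S (γ 0) (γ n) + wdist S (γ n) g := by
      have := wdist_triangle hsym hgen (γ 0) (γ n) g
      simpa [wdist, hγ0] using this
    rw [hγ 0 n, wdist_comm hsym hgen (γ n) g] at this
    simp only [sub_zero] at this
    omega
  refine ⟨fun g => if (∃ n : ℤ, 0 ≤ n ∧ wdist S g (γ n) ≤ L) then x g
    else if (∃ n : ℤ, n ≤ 0 ∧ wdist S g (γ n) ≤ L) then y g else a0, ?_, ?_, ?_, ?_⟩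
  · intro g hg; simp [hg]
  · intro g hg
    by_cases hp : ∃ n : ℤ, 0 ≤ n ∧ wdist S g (γ n) ≤ L
    · simp [hp, hg, key g hp hg]
    · simp [hp, hg]
  · intro g h1 h2; simp [h1, h2]
  · intro hx hy
    apply Set.Finite.subset (hx.union hy)
    intro g hg
    simp only [Set.mem_setOf_eq] at hg
    by_cases hp : ∃ n : ℤ, 0 ≤ n ∧ wdist S g (γ n) ≤ L
    · left; simpa [hp] using hg
    · by_cases hq : ∃ n : ℤ, n ≤ 0 ∧ wdist S g (γ n) ≤ L
      · right; simpa [hp, hq] using hg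
      · simp [hp, hq] at hg
end
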